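/- arXiv:2512.00957 — 4 statements merged into one kernel-verified Lean document; each statement's English description precedes it below -/
import Mathlib

section
/- Let X be a tree, g an automorphism of X without edge inversions, and v a vertex. Then g is hyperbolic if and only if d(g⁻¹·v, g·v) > d(v, g·v); equivalently, g is elliptic if and only if d(g⁻¹·v, g·v) ≤ d(v, g·v). Moreover, if g is hyperbolic then its translation length equals d(g⁻¹·v, g·v) − d(v, g·v). -/
/-!
Let `m` be the median of `v`, `g v`, `g² v` and put `D = d(v, g v)`, `k = d(m, g v)`. Then
`d(g⁻¹ v, g v) = d(v, g² v) = 2 (D - k)`, and `g` maps the first `k` vertices of the geodesic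
`[v, g v]` onto its last `k` ones in reverse order, because `[g v, m]` is shared by `[g v, v]`
and `g [v, g v] = [g v, g² v]`. If `2 k ≥ D` this fixes the midpoint of `[v, g v]` or inverts
its middle edge. If `2 k < D`, the vertex `a` at distance `k` from `v` is sent to `m`, which
lies on the geodesic `[a, g m]`; so the geodesics `[gⁿ a, gⁿ⁺¹ a]`, of length `D - 2 k > 0`,
concatenate without backtracking, and in a tree they line up into a geodesic axis. An orbit
growing linearly at rate `D - 2 k` forces every vertex to move at least `D - 2 k`. Conversely,
if `g` fixes `w`, it fixes the median of `w`, `v`, `g v`, whence `d(v, g² v) ≤ D`.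
-/

namespace SimpleGraph

variable {V V' : Type*} {G : SimpleGraph V} {G' : SimpleGraph V'}

lemma Hom.dist_le_of_reachable (f : G →g G') {u v : V} (h : G.Reachable u v) :
    G'.dist (f u) (f v) ≤ G.dist u v := by
  obtain ⟨p, hp⟩ := h.exists_walk_length_eq_dist
  simpa [hp] using G'.dist_le (p.map f)

lemma Iso.dist_eq (φ : G ≃g G') (u v : V) : G'.dist (φ u) (φ v) = G.dist u v := by
  by_cases h : G.Reachable u v
  · refine le_antisymm (φ.toHom.dist_le_of_reachable h) ?_
    simpa using φ.symm.toHom.dist_le_of_reachable ((Iso.reachable_iff (φ := φ)).2 h)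
  · rw [dist_eq_zero_of_not_reachable h,
      dist_eq_zero_of_not_reachable (mt Iso.reachable_iff.1 h)]

lemma Reachable.exists_dist_eq_of_le {x z : V} (h : G.Reachable x z) {i : ℕ}
    (hi : i ≤ G.dist x z) : ∃ m, G.dist x m = i ∧ G.dist x m + G.dist m z = G.dist x z := by
  obtain ⟨p, -, hp⟩ := h.exists_path_of_dist
  have htake := G.dist_le (p.take i)
  have hdrop := G.dist_le (p.drop i)
  have htri := (p.take i).reachable.dist_triangle_left z
  rw [Walk.take_length] at htake
  rw [Walk.drop_length] at hdrop
  exact ⟨p.getVert i, by omega, by omega⟩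

lemma Connected.dist_pow_apply_le (hG : G.Connected) (φ : G ≃g G) (u : V) (n : ℕ) :
    G.dist u ((φ ^ n) u) ≤ n * G.dist u (φ u) := by
  induction n with
  | zero => simp
  | succ n ih =>
    have hsucc : (φ ^ (n + 1)) u = (φ ^ n) (φ u) := by rw [pow_succ, RelIso.mul_apply]
    have := hG.dist_triangle (u := u) (v := (φ ^ n) u) (w := (φ ^ (n + 1)) u)
    rw [hsucc, (φ ^ n).dist_eq] at this
    rw [hsucc, add_one_mul]
    omega

lemma Connected.le_dist_apply_of_forall_mul_le (hG : G.Connected) (φ : G ≃g G) {a : V} {L : ℕ}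
    (h : ∀ n, n * L ≤ G.dist a ((φ ^ n) a)) (u : V) : L ≤ G.dist u (φ u) := by
  set c := G.dist a u
  have hn := h (2 * c + 1)
  have := hG.dist_pow_apply_le φ u (2 * c + 1)
  have := hG.dist_triangle (u := a) (v := u) (w := (φ ^ (2 * c + 1)) a)
  have := hG.dist_triangle (u := u) (v := (φ ^ (2 * c + 1)) u) (w := (φ ^ (2 * c + 1)) a)
  have := (φ ^ (2 * c + 1)).dist_eq u a
  have := G.dist_comm (u := u) (v := a)
  by_contra! hlt
  nlinarith

namespace IsTree

lemma getVert_dist_eq (hT : G.IsTree) {x z m : V} {p : G.Walk x z} (hp : p.IsPath)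
    (hm : G.dist x m + G.dist m z = G.dist x z) : p.getVert (G.dist x m) = m := by
  obtain ⟨q₁, -, hq₁⟩ := hT.connected.exists_path_of_dist x m
  obtain ⟨q₂, -, hq₂⟩ := hT.connected.exists_path_of_dist m z
  have hq : (q₁.append q₂).IsPath :=
    Walk.isPath_of_length_eq_dist _ (by rw [Walk.length_append]; omega)
  rw [(hT.existsUnique_path x z).unique hp hq, Walk.getVert_append', if_pos hq₁.ge, ← hq₁,
    Walk.getVert_length]

lemma eq_of_dist_add_dist_eq (hT : G.IsTree) {x z m m' : V}
    (hm : G.dist x m + G.dist m z = G.dist x z) (hm' : G.dist x m' + G.dist m' z = G.dist x z)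
    (h : G.dist x m = G.dist x m') : m = m' := by
  obtain ⟨p, hp, -⟩ := hT.connected.exists_path_of_dist x z
  rw [← hT.getVert_dist_eq hp hm, ← hT.getVert_dist_eq hp hm', h]

lemma dist_add_dist_eq_of_le (hT : G.IsTree) {a b c z : V}
    (hb : G.dist a b + G.dist b z = G.dist a z) (hc : G.dist a c + G.dist c z = G.dist a z)
    (hle : G.dist a b ≤ G.dist a c) : G.dist a b + G.dist b c = G.dist a c := by
  obtain ⟨y, hy, hyc⟩ := (hT.connected a c).exists_dist_eq_of_le hle
  have := hT.connected.dist_triangle (u := y) (v := c) (w := z)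
  have := hT.connected.dist_triangle (u := a) (v := y) (w := z)
  obtain rfl : b = y := hT.eq_of_dist_add_dist_eq hb (by omega) hy.symm
  exact hyc

lemma exists_median (hT : G.IsTree) (x y z : V) :
    ∃ m, G.dist x m + G.dist m y = G.dist x y ∧ G.dist y m + G.dist m z = G.dist y z ∧
      G.dist x m + G.dist m z = G.dist x z := by
  have tri : ∀ u v w : V, G.dist u w ≤ G.dist u v + G.dist v w := fun _ _ _ ↦
    hT.connected.dist_triangle
  induction hn : G.dist x y generalizing x with
  | zero =>
    obtain rfl := hT.connected.dist_eq_zero_iff.1 hn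
    exact ⟨x, by simp, by simp, by simp⟩
  | succ n ih =>
    obtain ⟨x', hxx', hx'⟩ := (hT.connected x y).exists_dist_eq_of_le (i := 1) (by omega)
    obtain ⟨m, hm₁, hm₂, hm₃⟩ := ih x' (by omega)
    rcases hT.dist_eq_dist_add_one_of_adj z (dist_eq_one_iff_adj.1 hxx') with hz | hz <;>
      rw [G.dist_comm (u := z), G.dist_comm (u := z)] at hz
    · have := tri x x' m
      have := tri x m y
      have := tri x m z
      exact ⟨m, by omega, hm₂, by omega⟩
    · -- otherwise the first step from `x'` towards `m` would be `x`, putting `x` on `[x', y]`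
      have hm : G.dist x' m = 0 := by
        by_contra hm
        obtain ⟨p, hp, hpm⟩ := (hT.connected x' m).exists_dist_eq_of_le (i := 1) (by omega)
        have := tri x' p z
        have := tri p m z
        have := tri x' p y
        have := tri p m y
        have hpx : p = x := hT.eq_of_dist_add_dist_eq (x := x') (z := z) (by omega)
          (by rw [G.dist_comm, hxx']; omega) (by rw [hp, G.dist_comm, hxx'])
        subst hpx
        rw [G.dist_comm] at hp
        omega
      obtain rfl := hT.connected.dist_eq_zero_iff.1 hm
      refine ⟨x, by simp [hn], ?_, by simp⟩
      rw [G.dist_comm (u := y) (v := x')] at hm₂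
      rw [G.dist_comm (u := y) (v := x)]
      omega

lemma dist_add_dist_eq_of_overlap (hT : G.IsTree) {a x y z : V}
    (hx : G.dist a x + G.dist x y = G.dist a y) (hy : G.dist x y + G.dist y z = G.dist x z)
    (hxy : 0 < G.dist x y) : G.dist a y + G.dist y z = G.dist a z := by
  obtain ⟨m, hm₁, hm₂, hm₃⟩ := hT.exists_median a y z
  have := hT.connected.dist_triangle (u := x) (v := m) (w := z)
  rw [G.dist_comm (u := y)] at hm₂
  suffices G.dist m y = 0 by omega
  rcases le_total (G.dist a x) (G.dist a m) with h | h
  · have := hT.dist_add_dist_eq_of_le hx hm₁ h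
    omega
  · have := hT.dist_add_dist_eq_of_le hm₁ hx h
    rw [G.dist_comm (u := m)] at this
    omega

lemma dist_eq_mul_of_dist_add_dist_eq (hT : G.IsTree) {x : ℕ → V} {L : ℕ} (hL : 0 < L)
    (hstep : ∀ n, G.dist (x n) (x (n + 1)) = L)
    (hgeod : ∀ n, G.dist (x n) (x (n + 1)) + G.dist (x (n + 1)) (x (n + 2)) =
      G.dist (x n) (x (n + 2)))
    (n : ℕ) : G.dist (x 0) (x n) = n * L := by
  suffices ∀ n, G.dist (x 0) (x n) = n * L ∧
      G.dist (x 0) (x n) + G.dist (x n) (x (n + 1)) = G.dist (x 0) (x (n + 1)) from (this n).1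
  intro n
  induction n with
  | zero => simp
  | succ n ih =>
    refine ⟨by rw [← ih.2, ih.1, hstep]; ring, ?_⟩
    exact hT.dist_add_dist_eq_of_overlap ih.2 (hgeod n) (hstep n ▸ hL)

lemma dist_apply_apply_le_of_apply_eq (hT : G.IsTree) (φ : G ≃g G) {w : V} (hw : φ w = w)
    (v : V) : G.dist v (φ (φ v)) ≤ G.dist v (φ v) := by
  obtain ⟨m, hwm, hvm, hwm'⟩ := hT.exists_median w v (φ v)
  have hφm : φ m = m := by
    refine hT.eq_of_dist_add_dist_eq (x := w) (z := φ v) ?_ hwm' ?_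
    · have h := hwm
      rw [← φ.dist_eq w m, ← φ.dist_eq m v, ← φ.dist_eq w v, hw] at h
      exact h
    · simpa [hw] using φ.dist_eq w m
  have := hT.connected.dist_triangle (u := v) (v := m) (w := φ (φ v))
  have := φ.dist_eq m (φ v)
  rw [hφm] at this
  omega

/-- If `[φ v, v]` and `[φ v, φ (φ v)]` share the segment `[φ v, m]`, then `φ` maps the initial
part of `[v, φ v]` of that length onto it, reversed. -/
lemma apply_eq_of_dist_eq_of_le (hT : G.IsTree) (φ : G ≃g G) {v m p q : V}
    (hm : G.dist (φ v) m + G.dist m v = G.dist (φ v) v)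
    (hm' : G.dist (φ v) m + G.dist m (φ (φ v)) = G.dist (φ v) (φ (φ v)))
    (hp : G.dist v p + G.dist p (φ v) = G.dist v (φ v))
    (hq : G.dist (φ v) q + G.dist q v = G.dist (φ v) v)
    (hpq : G.dist v p = G.dist (φ v) q) (hqm : G.dist (φ v) q ≤ G.dist (φ v) m) : φ p = q := by
  have := hT.dist_add_dist_eq_of_le hq hm hqm
  have := hT.connected.dist_triangle (u := q) (v := m) (w := φ (φ v))
  have := hT.connected.dist_triangle (u := φ v) (v := q) (w := φ (φ v))
  rw [← φ.dist_eq v p, ← φ.dist_eq p (φ v), ← φ.dist_eq v (φ v)] at hp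
  exact hT.eq_of_dist_add_dist_eq hp (by omega) (by rw [φ.dist_eq, hpq])

lemma exists_apply_eq_of_dist_le (hT : G.IsTree) (φ : G ≃g G)
    (hφ : ∀ u w, G.Adj u w → ¬(φ u = w ∧ φ w = u)) {v : V}
    (h : G.dist v (φ (φ v)) ≤ G.dist v (φ v)) : ∃ w, φ w = w := by
  obtain ⟨m, hvm, hm, hvm'⟩ := hT.exists_median v (φ v) (φ (φ v))
  have hD := φ.dist_eq v (φ v)
  have := G.dist_comm (u := v) (v := φ v)
  have := G.dist_comm (u := m) (v := φ v)
  have := G.dist_comm (u := v) (v := m)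
  -- `p` and `p'` are the middle vertex, or the two ends of the middle edge, of `[v, φ v]`
  obtain ⟨p, hp, hpv⟩ := (hT.connected v (φ v)).exists_dist_eq_of_le
    (i := G.dist v (φ v) / 2) (by omega)
  obtain ⟨p', hp', hp'v⟩ := (hT.connected v (φ v)).exists_dist_eq_of_le
    (i := G.dist v (φ v) - G.dist v (φ v) / 2) (by omega)
  have := G.dist_comm (u := v) (v := p)
  have := G.dist_comm (u := p) (v := φ v)
  have := G.dist_comm (u := v) (v := p')
  have := G.dist_comm (u := p') (v := φ v)
  have hpp' : φ p = p' :=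
    hT.apply_eq_of_dist_eq_of_le φ (by omega) hm hpv (by omega) (by omega) (by omega)
  have hp'p : φ p' = p :=
    hT.apply_eq_of_dist_eq_of_le φ (by omega) hm hp'v (by omega) (by omega) (by omega)
  by_cases hne : p = p'
  · exact ⟨p, hne ▸ hpp'⟩
  · have := hT.dist_add_dist_eq_of_le hpv hp'v (by omega)
    have := hT.connected.pos_dist_of_ne hne
    exact (hφ p p' (dist_eq_one_iff_adj.1 (by omega)) ⟨hpp', hp'p⟩).elim

lemma exists_dist_add_dist_eq_of_lt (hT : G.IsTree) (φ : G ≃g G) {v : V}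
    (h : G.dist v (φ v) < G.dist v (φ (φ v))) :
    ∃ a, G.dist a (φ a) = G.dist v (φ (φ v)) - G.dist v (φ v) ∧
      G.dist a (φ a) + G.dist (φ a) (φ (φ a)) = G.dist a (φ (φ a)) := by
  obtain ⟨m, hvm, hm, hvm'⟩ := hT.exists_median v (φ v) (φ (φ v))
  have hD := φ.dist_eq v (φ v)
  have := G.dist_comm (u := v) (v := φ v)
  have := G.dist_comm (u := m) (v := φ v)
  have := G.dist_comm (u := v) (v := m)
  obtain ⟨a, ha, hav⟩ := (hT.connected v (φ v)).exists_dist_eq_of_le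
    (i := G.dist (φ v) m) (by omega)
  have hφa : φ a = m :=
    hT.apply_eq_of_dist_eq_of_le φ (by omega) hm hav (by omega) ha le_rfl
  have ham := hT.dist_add_dist_eq_of_le hav hvm (by omega)
  have hφvm : G.dist (φ v) (φ m) + G.dist (φ m) (φ (φ v)) = G.dist (φ v) (φ (φ v)) := by
    rwa [φ.dist_eq, φ.dist_eq, φ.dist_eq]
  have hmφm := hT.dist_add_dist_eq_of_le hm hφvm (by rw [φ.dist_eq]; omega)
  have tri : ∀ x y z : V, G.dist x z ≤ G.dist x y + G.dist y z := fun _ _ _ ↦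
    hT.connected.dist_triangle
  have := tri a m (φ (φ v))
  have := tri v a (φ (φ v))
  have := tri m (φ m) (φ (φ v))
  have := tri (φ v) m (φ (φ v))
  have := tri a m (φ m)
  have := tri a (φ m) (φ (φ v))
  exact ⟨a, by rw [hφa]; omega, by rw [hφa]; omega⟩

lemma dist_apply_le_of_dist_add_dist_eq (hT : G.IsTree) (φ : G ≃g G) {a : V}
    (h : G.dist a (φ a) + G.dist (φ a) (φ (φ a)) = G.dist a (φ (φ a))) (u : V) :
    G.dist a (φ a) ≤ G.dist u (φ u) := by
  rcases Nat.eq_zero_or_pos (G.dist a (φ a)) with h0 | hpos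
  · simp [h0]
  have hsucc (n : ℕ) (b : V) : (φ ^ (n + 1)) b = (φ ^ n) (φ b) := by
    rw [pow_succ, RelIso.mul_apply]
  refine hT.connected.le_dist_apply_of_forall_mul_le φ (a := a) (fun n ↦ ?_) u
  have := hT.dist_eq_mul_of_dist_add_dist_eq (x := fun n ↦ (φ ^ n) a) hpos
    (fun n ↦ by simp only [hsucc, Iso.dist_eq])
    (fun n ↦ by simpa only [hsucc, Iso.dist_eq] using h) n
  simp only [pow_zero, RelIso.one_apply] at this
  exact this.ge

end IsTree

end SimpleGraph

/-- For an automorphism `g` of a tree without edge inversions and a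
vertex `v`: `g` is hyperbolic (fixes no vertex) iff `d(g⁻¹ v, g v) > d(v, g v)`;
equivalently `g` is elliptic iff `d(g⁻¹ v, g v) ≤ d(v, g v)`. Moreover, if `g` is
hyperbolic, its translation length `min_u d(u, g u)` equals
`d(g⁻¹ v, g v) − d(v, g v)`. -/
theorem stmt_2 {V : Type*} (G : SimpleGraph V) (hT : G.IsTree)
    (g : V ≃ V) (hg : ∀ v w, G.Adj (g v) (g w) ↔ G.Adj v w)
    (hnoinv : ∀ v w, G.Adj v w → ¬(g v = w ∧ g w = v)) (v : V) :
    ((∀ w, g w ≠ w) ↔ G.dist (g.symm v) (g v) > G.dist v (g v)) ∧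
    ((∃ w, g w = w) ↔ G.dist (g.symm v) (g v) ≤ G.dist v (g v)) ∧
    ((∀ w, g w ≠ w) →
      sInf (Set.range fun u => G.dist u (g u)) =
        G.dist (g.symm v) (g v) - G.dist v (g v)) := by
  let φ : G ≃g G := ⟨g, hg _ _⟩
  have hφ (x : V) : φ x = g x := rfl
  have hsymm : G.dist (g.symm v) (g v) = G.dist v (g (g v)) := by
    rw [← φ.dist_eq, hφ, hφ, Equiv.apply_symm_apply]
  have hell (w : V) (hw : g w = w) : G.dist v (g (g v)) ≤ G.dist v (g v) :=
    hT.dist_apply_apply_le_of_apply_eq φ hw v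
  have hhyp (hfree : ∀ w, g w ≠ w) : G.dist v (g v) < G.dist v (g (g v)) := by
    by_contra! h
    obtain ⟨w, hw⟩ := hT.exists_apply_eq_of_dist_le φ hnoinv h
    exact hfree w hw
  rw [hsymm]
  refine ⟨⟨hhyp, fun h w hw ↦ (hell w hw).not_gt h⟩,
    ⟨fun ⟨w, hw⟩ ↦ hell w hw, hT.exists_apply_eq_of_dist_le φ hnoinv⟩, fun hfree ↦ ?_⟩
  obtain ⟨a, ha, hgeod⟩ := hT.exists_dist_add_dist_eq_of_lt φ (hhyp hfree)
  rw [hφ, hφ, hφ] at ha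
  rw [← ha]
  exact IsLeast.csInf_eq
    ⟨⟨a, rfl⟩, Set.forall_mem_range.2 (hT.dist_apply_le_of_dist_add_dist_eq φ hgeod)⟩
end

section
/- Let m₁ ≥ m₂ > 0 be integers with Euclidean sequence m_i (so m_{i+2} = m_i − ⌊m_i/m_{i+1}⌋·m_{i+1}, terminating at m_{k+1} = 0 with m_k = gcd(m₁,m₂)), and quotients q_i = ⌊m_i/m_{i+1}⌋. Then for every real l with m₂ < l ≤ m₁ + m₂ − gcd(m₁,m₂), there exist unique integers j, q with 1 ≤ j ≤ k−1 and 0 ≤ q ≤ q_j − 1 such that (m₁+m₂) − m_j + (q−1)·m_{j+1} < l ≤ (m₁+m₂) − m_j + q·m_{j+1}. -/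
/-!
Put `S = m₁ + m₂`. For fixed `j` the cut points `S - m_j + (q - 1) m_{j+1}` increase in `q` with
step `m_{j+1}`, from `S - m_j - m_{j+1}` at `q = 0` to `S - m_{j+1} - m_{j+2}` at `q = q_j`, because
`m_j = q_j m_{j+1} + m_{j+2}`; the latter is the value at `q = 0` for `j + 1`. So the intervals
refine the partition of `(0, S - m_k]` by the increasing points `S - m_j - m_{j+1}`, `1 ≤ j ≤ k`,
and `m_k = gcd(m₁, m₂)` because the Euclidean step preserves the gcd.
-/

open Set

section Partition

variable {α : Type*} [LinearOrder α]

theorem existsUnique_mem_Ioc_of_monotoneOn {b : ℕ → α} {a n : ℕ} (han : a ≤ n)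
    (hb : MonotoneOn b (Icc a n)) {x : α} (hx : x ∈ Ioc (b a) (b n)) :
    ∃! i, i ∈ Ico a n ∧ x ∈ Ioc (b i) (b (i + 1)) := by
  refine existsUnique_of_exists_of_unique ?_ ?_
  · induction n, han using Nat.le_induction with
    | base => exact absurd (hx.1.trans_le hx.2) (lt_irrefl _)
    | succ n han ih =>
      by_cases hxn : x ≤ b n
      · obtain ⟨i, hi, hxi⟩ := ih (hb.mono (Icc_subset_Icc_right n.le_succ)) ⟨hx.1, hxn⟩
        exact ⟨i, Ico_subset_Ico_right n.le_succ hi, hxi⟩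
      · exact ⟨n, ⟨han, n.lt_succ_self⟩, not_le.1 hxn, hx.2⟩
  · rintro i j ⟨⟨hai, hin⟩, hxi⟩ ⟨⟨haj, hjn⟩, hxj⟩
    by_contra hne
    wlog hij : i < j generalizing i j
    · exact this j i hxj haj hjn hxi hai hin (Ne.symm hne) (by omega)
    have hb_le : b (i + 1) ≤ b j := hb ⟨by omega, by omega⟩ ⟨haj, hjn.le⟩ hij
    exact lt_irrefl _ (hxj.1.trans_le (hxi.2.trans hb_le))

theorem existsUnique_prod_mem_Ioc_of_monotone {c : ℕ → ℕ → α} {N : ℕ → ℕ} {a n : ℕ}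
    (han : a ≤ n) (hc : ∀ i ∈ Ico a n, Monotone (c i))
    (hcN : ∀ i ∈ Ico a n, c i (N i) = c (i + 1) 0) {x : α} (hx : x ∈ Ioc (c a 0) (c n 0)) :
    ∃! p : ℕ × ℕ,
      p.1 ∈ Ico a n ∧ p.2 < N p.1 ∧ x ∈ Ioc (c p.1 p.2) (c p.1 (p.2 + 1)) := by
  have hstart : MonotoneOn (fun i ↦ c i 0) (Icc a n) :=
    monotoneOn_of_le_succ ordConnected_Icc fun i _ hi hi' ↦
      (hc i ⟨hi.1, hi'.2⟩ (Nat.zero_le _)).trans_eq (hcN i ⟨hi.1, hi'.2⟩)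
  obtain ⟨i, ⟨hi, hxi⟩, hi_unique⟩ := existsUnique_mem_Ioc_of_monotoneOn han hstart hx
  obtain ⟨q, ⟨hq, hxq⟩, hq_unique⟩ := existsUnique_mem_Ioc_of_monotoneOn (Nat.zero_le (N i))
    ((hc i hi).monotoneOn _) (by rwa [hcN i hi])
  refine ⟨(i, q), ⟨hi, hq.2, hxq⟩, ?_⟩
  rintro ⟨i', q'⟩ ⟨hi', hq', hxq'⟩
  have hxi' : x ∈ Ioc (c i' 0) (c (i' + 1) 0) :=
    ⟨(hc i' hi' (Nat.zero_le _)).trans_lt hxq'.1,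
      hxq'.2.trans ((hc i' hi' hq').trans_eq (hcN i' hi'))⟩
  obtain rfl := hi_unique i' ⟨hi', hxi'⟩
  obtain rfl := hq_unique q' ⟨⟨Nat.zero_le _, hq'⟩, hxq'⟩
  rfl

end Partition

section Euclid

variable {m : ℕ → ℕ} {k : ℕ}

theorem gcd_eq_gcd_one_two_of_mod
    (hmod : ∀ i, 1 ≤ i → i < k → m (i + 2) = m i % m (i + 1)) :
    ∀ i, 1 ≤ i → i ≤ k → Nat.gcd (m i) (m (i + 1)) = Nat.gcd (m 1) (m 2) := by
  intro i hi
  induction i, hi using Nat.le_induction with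
  | base => exact fun _ ↦ rfl
  | succ i hi ih =>
    intro hik
    rw [hmod i hi hik, Nat.gcd_comm, ← Nat.gcd_rec, Nat.gcd_comm]
    exact ih (by omega)

theorem apply_succ_le_of_mod (h12 : m 2 ≤ m 1)
    (hmod : ∀ i, 1 ≤ i → i < k → m (i + 2) = m i % m (i + 1))
    (hpos : ∀ i, 1 ≤ i → i ≤ k → 0 < m i) : ∀ j, 1 ≤ j → j < k → m (j + 1) ≤ m j
  | 1, _, _ => h12
  | i + 2, _, hik => by
    rw [hmod (i + 1) (by omega) (by omega)]
    exact (Nat.mod_lt _ (hpos (i + 2) (by omega) hik.le)).le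

/-- `euclidCut m j q < l ≤ euclidCut m j (q + 1)` says that `l` lies in the interval indexed by
`(j, q)`. -/
def euclidCut (m : ℕ → ℕ) (j q : ℕ) : ℝ := m 1 + m 2 - m j + ((q : ℝ) - 1) * m (j + 1)

theorem monotone_euclidCut (m : ℕ → ℕ) (j : ℕ) : Monotone (euclidCut m j) := by
  intro q q' hq
  unfold euclidCut
  gcongr

theorem euclidCut_succ (m : ℕ → ℕ) (j q : ℕ) :
    euclidCut m j (q + 1) = m 1 + m 2 - m j + q * m (j + 1) := by
  unfold euclidCut
  push_cast
  ring

theorem euclidCut_one_zero (m : ℕ → ℕ) : euclidCut m 1 0 = 0 := by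
  unfold euclidCut
  push_cast
  ring

theorem euclidCut_div_eq {j : ℕ} (hj : m (j + 2) = m j % m (j + 1)) :
    euclidCut m j (m j / m (j + 1)) = euclidCut m (j + 1) 0 := by
  have hdiv : ((m j / m (j + 1) : ℕ) : ℝ) * m (j + 1) + m (j + 2) = m j := by
    rw [hj]
    exact_mod_cast Nat.div_add_mod' (m j) (m (j + 1))
  unfold euclidCut
  push_cast
  linarith

end Euclid

theorem stmt_5_general (m : ℕ → ℕ) (h12 : m 2 ≤ m 1)
    (hrec : ∀ i, 1 ≤ i → 0 < m (i + 1) →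
      m (i + 2) = m i - (m i / m (i + 1)) * m (i + 1))
    (k : ℕ) (hk : 1 ≤ k) (hk0 : m (k + 1) = 0)
    (hkpos : ∀ i, 1 ≤ i → i ≤ k → 0 < m i)
    (l : ℝ) (hl1 : (m 2 : ℝ) < l)
    (hl2 : l ≤ (m 1 : ℝ) + (m 2 : ℝ) - (Nat.gcd (m 1) (m 2) : ℝ)) :
    ∃! p : ℕ × ℕ, 1 ≤ p.1 ∧ p.1 ≤ k - 1 ∧ p.2 ≤ m p.1 / m (p.1 + 1) - 1 ∧
      ((m 1 : ℝ) + (m 2 : ℝ)) - (m p.1 : ℝ) + ((p.2 : ℝ) - 1) * (m (p.1 + 1) : ℝ) < l ∧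
      l ≤ ((m 1 : ℝ) + (m 2 : ℝ)) - (m p.1 : ℝ) + (p.2 : ℝ) * (m (p.1 + 1) : ℝ) := by
  have hmod : ∀ i, 1 ≤ i → i < k → m (i + 2) = m i % m (i + 1) := fun i hi hik ↦
    (hrec i hi (hkpos (i + 1) (by omega) hik)).trans Nat.mod_eq_sub_div_mul.symm
  have hgcd : m k = Nat.gcd (m 1) (m 2) := by
    simpa [hk0] using gcd_eq_gcd_one_two_of_mod hmod k hk le_rfl
  have hl : l ∈ Ioc (euclidCut m 1 0) (euclidCut m k 0) := by
    refine ⟨by rw [euclidCut_one_zero]; exact (Nat.cast_nonneg _).trans_lt hl1, ?_⟩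
    simpa [euclidCut, hk0, hgcd] using hl2
  refine (existsUnique_congr fun p ↦ ?_).1 <| existsUnique_prod_mem_Ioc_of_monotone hk
    (fun j _ ↦ monotone_euclidCut m j) (fun j hj ↦ euclidCut_div_eq (hmod j hj.1 hj.2)) hl
  obtain ⟨j, q⟩ := p
  simp only [mem_Ico, mem_Ioc, euclidCut_succ]
  constructor
  · rintro ⟨⟨hj, hjk⟩, hqj, hl⟩
    exact ⟨hj, by omega, by omega, hl⟩
  · rintro ⟨hj, hjk, hqj, hl⟩
    have hq_pos : 0 < m j / m (j + 1) := Nat.div_pos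
      (apply_succ_le_of_mod h12 hmod hkpos j hj (by omega)) (hkpos (j + 1) (by omega) (by omega))
    exact ⟨⟨hj, by omega⟩, by omega, hl⟩

/-- With the Euclidean sequence `m_i` (quotients `q_i = ⌊m_i/m_{i+1}⌋`,
termination `m_{k+1} = 0`, `m_k = gcd(m₁,m₂)`), every real `l` with
`m₂ < l ≤ m₁ + m₂ − gcd(m₁,m₂)` lies in exactly one of the intervals
`((m₁+m₂) − m_j + (q−1) m_{j+1}, (m₁+m₂) − m_j + q m_{j+1}]` with
`1 ≤ j ≤ k−1`, `0 ≤ q ≤ q_j − 1`. -/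
theorem stmt_5 (m : ℕ → ℕ) (h12 : m 2 ≤ m 1) (h2 : 0 < m 2)
    (hrec : ∀ i, 1 ≤ i → 0 < m (i + 1) →
      m (i + 2) = m i - (m i / m (i + 1)) * m (i + 1))
    (k : ℕ) (hk : 1 ≤ k) (hk0 : m (k + 1) = 0)
    (hkpos : ∀ i, 1 ≤ i → i ≤ k → 0 < m i)
    (l : ℝ) (hl1 : (m 2 : ℝ) < l)
    (hl2 : l ≤ (m 1 : ℝ) + (m 2 : ℝ) - (Nat.gcd (m 1) (m 2) : ℝ)) :
    ∃! p : ℕ × ℕ, 1 ≤ p.1 ∧ p.1 ≤ k - 1 ∧ p.2 ≤ m p.1 / m (p.1 + 1) - 1 ∧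
      ((m 1 : ℝ) + (m 2 : ℝ)) - (m p.1 : ℝ) + ((p.2 : ℝ) - 1) * (m (p.1 + 1) : ℝ) < l ∧
      l ≤ ((m 1 : ℝ) + (m 2 : ℝ)) - (m p.1 : ℝ) + (p.2 : ℝ) * (m (p.1 + 1) : ℝ) :=
  stmt_5_general m h12 hrec k hk hk0 hkpos l hl1 hl2
end

section
/- Let m₁ ≥ m₂ > 0 be reals with m₂/m₁ irrational and m_i the infinite Euclidean sequence (q_i = ⌊m_i/m_{i+1}⌋, m_{i+2} = m_i − q_i m_{i+1}). Then for every real l with m₂ < l < m₁ + m₂, there exist unique integers j ≥ 1 and 0 ≤ q ≤ q_j − 1 such that (m₁+m₂) − m_j + (q−1)·m_{j+1} < l ≤ (m₁+m₂) − m_j + q·m_{j+1}. -/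
/-!
Put `t = (m₁ + m₂) - l ∈ (0, m₁ + m₂)` and `s_j = m_j + m_{j+1}`. Since `q_j ≥ 1` we have
`m_{j+1} + m_{j+2} ≤ m_j`, so the sums `s_j` decrease and `2 m_{j+2} < m_j`, whence `s_j → 0`;
hence `t` lies in exactly one interval `[s_{j+1}, s_j)`. As
`s_{j+1} = m_j - (q_j - 1) m_{j+1}`, that interval is cut by the points
`m_j - q m_{j+1}`, `0 ≤ q < q_j`, into the pieces `[m_j - q m_{j+1}, m_j - (q - 1) m_{j+1})`,
and `t` lies in exactly one of them.
-/

theorem existsUnique_prod_of_fibers {α β : Type*} {P : α → Prop} {Q : α × β → Prop}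
    (hP : ∃! a, P a) (hQP : ∀ a b, Q (a, b) → P a) (hQ : ∀ a, P a → ∃! b, Q (a, b)) :
    ∃! p, Q p := by
  obtain ⟨a, ha, ha_uniq⟩ := hP
  obtain ⟨b, hb, hb_uniq⟩ := hQ a ha
  refine ⟨(a, b), hb, fun ⟨a', b'⟩ h => ?_⟩
  obtain rfl := ha_uniq a' (hQP a' b' h)
  rw [hb_uniq b' h]

theorem AntitoneOn.existsUnique_le_succ_lt {α : Type*} [LinearOrder α] {s : ℕ → α} {k : ℕ}
    {t : α} (hs : AntitoneOn s (Set.Ici k)) (hk : t < s k) (hex : ∃ n ≥ k, s n ≤ t) :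
    ∃! j, k ≤ j ∧ s (j + 1) ≤ t ∧ t < s j := by
  classical
  have hP : ∃ n, k ≤ n ∧ s (n + 1) ≤ t := by
    obtain ⟨n, hkn, hn⟩ := hex
    have hkn' : k < n := hkn.lt_of_ne (by rintro rfl; exact hn.not_gt hk)
    exact ⟨n - 1, by omega, by rwa [Nat.sub_add_cancel (by omega)]⟩
  obtain ⟨hkj, hj⟩ := Nat.find_spec hP
  refine ⟨Nat.find hP, ⟨hkj, hj, ?_⟩, ?_⟩
  · obtain h | h := hkj.eq_or_lt
    · rwa [← h]
    · have hmin := Nat.find_min hP (m := Nat.find hP - 1) (by omega)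
      rw [not_and, not_le, Nat.sub_add_cancel (by omega)] at hmin
      exact hmin (by omega)
  · rintro j ⟨hkj', hj', htj⟩
    refine le_antisymm (not_lt.mp fun hlt => ?_) (Nat.find_min' hP ⟨hkj', hj'⟩)
    have hle : s j ≤ s (Nat.find hP + 1) :=
      hs (Set.mem_Ici.2 (by omega)) (Set.mem_Ici.2 (by omega)) hlt
    exact (hle.trans hj).not_gt htj

theorem existsUnique_nat_Ioc {d b l : ℝ} {n : ℤ} (hb : 0 < b) (h₁ : d - b < l)
    (h₂ : l ≤ d + (n - 1) * b) :
    ∃! q : ℕ, (q : ℤ) ≤ n - 1 ∧ d + (q - 1) * b < l ∧ l ≤ d + q * b := by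
  have hceil : ∀ c : ℤ, ⌈(l - d) / b⌉ = c ↔ d + (c - 1) * b < l ∧ l ≤ d + c * b := by
    intro c
    rw [Int.ceil_eq_iff, lt_div_iff₀ hb, div_le_iff₀ hb]
    constructor <;> rintro ⟨h, h'⟩ <;> constructor <;> linarith
  have hc₀ : (-1 : ℤ) < ⌈(l - d) / b⌉ := by
    rw [Int.lt_ceil, Int.cast_neg, Int.cast_one, lt_div_iff₀ hb]
    linarith
  have hc₁ : ⌈(l - d) / b⌉ ≤ n - 1 := by
    rw [Int.ceil_le, div_le_iff₀ hb]
    push_cast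
    linarith
  obtain ⟨q, hq⟩ := Int.eq_ofNat_of_zero_le (by omega : 0 ≤ ⌈(l - d) / b⌉)
  refine ⟨q, ⟨hq ▸ hc₁, by exact_mod_cast (hceil q).1 hq⟩, fun q' ⟨_, hq'⟩ => ?_⟩
  exact_mod_cast ((hceil q').2 (by exact_mod_cast hq')).symm.trans hq

theorem sub_lt_and_le_of_nat_Ioc {d b l : ℝ} {n : ℤ} {q : ℕ} (hb : 0 ≤ b)
    (hq : (q : ℤ) ≤ n - 1) (h₁ : d + (q - 1) * b < l) (h₂ : l ≤ d + q * b) :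
    d - b < l ∧ l ≤ d + (n - 1) * b := by
  have hq' : (q : ℝ) ≤ n - 1 := by exact_mod_cast hq
  constructor
  · nlinarith [q.cast_nonneg (α := ℝ)]
  · nlinarith

structure IsEuclidSeq (m : ℕ → ℝ) : Prop where
  second_le_first : m 2 ≤ m 1
  pos : ∀ i, 1 ≤ i → 0 < m i
  eq_sub_floor_mul : ∀ i, 1 ≤ i → m (i + 2) = m i - ⌊m i / m (i + 1)⌋ * m (i + 1)

namespace IsEuclidSeq

variable {m : ℕ → ℝ} {i : ℕ}

theorem lt_succ (hm : IsEuclidSeq m) (hi : 1 ≤ i) : m (i + 2) < m (i + 1) :=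
  hm.eq_sub_floor_mul i hi ▸ Int.sub_floor_div_mul_lt _ (hm.pos _ (by omega))

theorem succ_le (hm : IsEuclidSeq m) (hi : 1 ≤ i) : m (i + 1) ≤ m i :=
  match i, hi with
  | 1, _ => hm.second_le_first
  | k + 2, _ => (hm.lt_succ (by omega : 1 ≤ k + 1)).le

theorem one_le_floor (hm : IsEuclidSeq m) (hi : 1 ≤ i) : (1 : ℤ) ≤ ⌊m i / m (i + 1)⌋ :=
  Int.le_floor.2 <| by
    rw [Int.cast_one, one_le_div₀ (hm.pos _ (by omega))]
    exact hm.succ_le hi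

theorem succ_add_le (hm : IsEuclidSeq m) (hi : 1 ≤ i) : m (i + 1) + m (i + 2) ≤ m i := by
  have hq : (1 : ℝ) ≤ ⌊m i / m (i + 1)⌋ := by exact_mod_cast hm.one_le_floor hi
  nlinarith [hm.eq_sub_floor_mul i hi, hm.pos (i + 1) (by omega)]

theorem antitoneOn_add_succ (hm : IsEuclidSeq m) :
    AntitoneOn (fun j => m j + m (j + 1)) (Set.Ici 1) :=
  antitoneOn_nat_Ici_of_succ_le fun j hj => by
    linarith [hm.succ_add_le hj, hm.pos (j + 1) (by omega)]

theorem le_half_pow_mul (hm : IsEuclidSeq m) (k : ℕ) : m (2 * k + 1) ≤ (1 / 2) ^ k * m 1 := by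
  induction k with
  | zero => simp
  | succ k ih =>
    have h := hm.succ_add_le (i := 2 * k + 1) (by omega)
    have h' := hm.lt_succ (i := 2 * k + 1) (by omega)
    rw [show 2 * (k + 1) + 1 = 2 * k + 1 + 2 by ring, pow_succ]
    linarith

theorem exists_add_succ_le (hm : IsEuclidSeq m) {t : ℝ} (ht : 0 < t) :
    ∃ j ≥ 1, m j + m (j + 1) ≤ t := by
  obtain ⟨k, hk⟩ := exists_pow_lt_of_lt_one (div_pos ht (mul_pos two_pos (hm.pos 1 le_rfl)))
    (by norm_num : (1 / 2 : ℝ) < 1)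
  refine ⟨2 * k + 1, by omega, ?_⟩
  rw [lt_div_iff₀ (mul_pos two_pos (hm.pos 1 le_rfl))] at hk
  linarith [hm.succ_le (i := 2 * k + 1) (by omega), hm.le_half_pow_mul k]

end IsEuclidSeq

theorem stmt_8_general (m : ℕ → ℝ) (h12 : m 2 ≤ m 1)
    (hpos : ∀ i, 1 ≤ i → 0 < m i)
    (hrec : ∀ i, 1 ≤ i → m (i + 2) = m i - (⌊m i / m (i + 1)⌋ : ℝ) * m (i + 1))
    (l : ℝ) (hl1 : m 2 < l) (hl2 : l < m 1 + m 2) :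
    ∃! p : ℕ × ℕ, 1 ≤ p.1 ∧ (p.2 : ℤ) ≤ ⌊m p.1 / m (p.1 + 1)⌋ - 1 ∧
      (m 1 + m 2) - m p.1 + ((p.2 : ℝ) - 1) * m (p.1 + 1) < l ∧
      l ≤ (m 1 + m 2) - m p.1 + (p.2 : ℝ) * m (p.1 + 1) := by
  have hm : IsEuclidSeq m := ⟨h12, hpos, hrec⟩
  have hj_unique := hm.antitoneOn_add_succ.existsUnique_le_succ_lt (t := m 1 + m 2 - l)
    (by linarith [hpos 2 (by norm_num)]) (hm.exists_add_succ_le (by linarith))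
  refine existsUnique_prod_of_fibers hj_unique ?_ ?_
  · rintro j q ⟨hj, hq, h₁, h₂⟩
    obtain ⟨h₁', h₂'⟩ := sub_lt_and_le_of_nat_Ioc (hpos (j + 1) (by omega)).le hq h₁ h₂
    exact ⟨hj, by linarith [hrec j hj], by linarith⟩
  · rintro j ⟨hj, h₁, h₂⟩
    obtain ⟨q, hq, hq_uniq⟩ :=
      existsUnique_nat_Ioc (d := m 1 + m 2 - m j) (n := ⌊m j / m (j + 1)⌋) (l := l)
        (hpos (j + 1) (by omega)) (by linarith) (by linarith [hrec j hj])
    exact ⟨q, ⟨hj, hq⟩, fun q' h => hq_uniq q' h.2⟩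

/-- For reals `m₁ ≥ m₂ > 0` with `m₂/m₁` irrational and the infinite
Euclidean sequence `m_i` (quotients `q_i = ⌊m_i/m_{i+1}⌋`), every real `l` with
`m₂ < l < m₁ + m₂` lies in exactly one interval
`((m₁+m₂) − m_j + (q−1) m_{j+1}, (m₁+m₂) − m_j + q m_{j+1}]` with `j ≥ 1` and
`0 ≤ q ≤ q_j − 1`. -/
theorem stmt_8 (m : ℕ → ℝ) (h12 : m 2 ≤ m 1) (h2 : 0 < m 2)
    (hirr : Irrational (m 2 / m 1))
    (hpos : ∀ i, 1 ≤ i → 0 < m i)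
    (hrec : ∀ i, 1 ≤ i → m (i + 2) = m i - (⌊m i / m (i + 1)⌋ : ℝ) * m (i + 1))
    (l : ℝ) (hl1 : m 2 < l) (hl2 : l < m 1 + m 2) :
    ∃! p : ℕ × ℕ, 1 ≤ p.1 ∧ (p.2 : ℤ) ≤ ⌊m p.1 / m (p.1 + 1)⌋ - 1 ∧
      (m 1 + m 2) - m p.1 + ((p.2 : ℝ) - 1) * m (p.1 + 1) < l ∧
      l ≤ (m 1 + m 2) - m p.1 + (p.2 : ℝ) * m (p.1 + 1) :=
  stmt_8_general m h12 hpos hrec l hl1 hl2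
end

section
/- Let m₁ ≥ m₂ > 0 be integers and run the triple-reduction algorithm on (l, m₁, m₂): while the current triple (l', a, b) (normalized so a ≥ b) satisfies l' ≥ b and a > 0, replace it by (l' − b, a − b, b) and renormalize. If the initial l satisfies l ≥ m₁ + m₂ − gcd(m₁, m₂), then the algorithm runs through the full Euclidean algorithm and terminates at the triple (l − m₁ − m₂ + gcd(m₁,m₂), gcd(m₁,m₂), 0). -/
open scoped Classical in
/-- One step of the triple-reduction algorithm: swap when `a < b`; subtract
`(l, a, b) ↦ (l − b, a − b, b)` when `a ≥ b`, `b > 0` and `l ≥ b`; otherwise stop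
(fixed point). -/
noncomputable def tripleStep (t : ℝ × ℕ × ℕ) : ℝ × ℕ × ℕ :=
  if t.2.1 < t.2.2 then (t.1, t.2.2, t.2.1)
  else if 0 < t.2.2 ∧ (t.2.2 : ℝ) ≤ t.1 then (t.1 - t.2.2, t.2.1 - t.2.2, t.2.2)
  else t

lemma tripleStep_aux : ∀ a b : ℕ, 0 < b → b ≤ a → ∀ l : ℝ,
    (a : ℝ) + b - Nat.gcd a b ≤ l →
    ∃ n, tripleStep^[n] (l, a, b) =
      (l - a - b + (Nat.gcd a b : ℝ), Nat.gcd a b, 0) := by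
  intro a
  induction a using Nat.strong_induction_on with
  | _ a ih =>
    intro b hb hba l hl
    have ha : 0 < a := lt_of_lt_of_le hb hba
    have hg : Nat.gcd a b ≤ a := Nat.le_of_dvd ha (Nat.gcd_dvd_left a b)
    have hbl : (b : ℝ) ≤ l := by
      have : (Nat.gcd a b : ℝ) ≤ (a : ℝ) := by exact_mod_cast hg
      linarith
    have hstep : tripleStep (l, a, b) = (l - b, a - b, b) := by
      simp only [tripleStep]
      rw [if_neg (by simpa using Nat.not_lt.mpr hba), if_pos ⟨hb, hbl⟩]
    rcases eq_or_lt_of_le hba with heq | hlt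
    · -- a = b
      subst heq
      refine ⟨2, ?_⟩
      have h2 : tripleStep (l - b, b - b, b) = (l - b, b, b - b) := by
        simp only [tripleStep]
        rw [if_pos (by simpa using hb)]
      rw [show (2 : ℕ) = 1 + 1 from rfl, Function.iterate_add_apply]
      simp only [Function.iterate_one]
      rw [hstep, h2]
      simp [Nat.gcd_self]
    · -- b < a
      have hsub : (↑(a - b) : ℝ) = (a : ℝ) - b := by
        rw [Nat.cast_sub hba]
      have hgcd : Nat.gcd (a - b) b = Nat.gcd a b := Nat.gcd_sub_self_left hba
      rcases le_or_gt b (a - b) with hle | hlt2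
      · -- recurse on (l - b, a - b, b)
        obtain ⟨n, hn⟩ := ih (a - b) (by omega) b hb hle (l - b)
          (by rw [hgcd, hsub]; linarith)
        refine ⟨n + 1, ?_⟩
        rw [Function.iterate_succ_apply, hstep, hn, hgcd]
        rw [hsub]
        ring_nf
      · -- swap then recurse on (l - b, b, a - b)
        have hab : 0 < a - b := by omega
        have hswap : tripleStep (l - b, a - b, b) = (l - b, b, a - b) := by
          simp only [tripleStep]
          rw [if_pos (by simpa using hlt2)]
        have hgcd2 : Nat.gcd b (a - b) = Nat.gcd a b := by
          rw [Nat.gcd_comm, hgcd]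
        obtain ⟨n, hn⟩ := ih b hlt (a - b) hab (le_of_lt hlt2) (l - b)
          (by rw [hgcd2, hsub]; linarith)
        refine ⟨n + 2, ?_⟩
        rw [show n + 2 = n + 1 + 1 from rfl, Function.iterate_succ_apply,
          hstep, Function.iterate_succ_apply, hswap, hn, hgcd2]
        rw [hsub]
        ring_nf

/-- For integers `m₁ ≥ m₂ > 0` and a real `l` with
`l ≥ m₁ + m₂ − gcd(m₁,m₂)`, the triple-reduction algorithm started at
`(l, m₁, m₂)` runs through the full Euclidean algorithm and terminates at the
fixed point `(l − m₁ − m₂ + gcd(m₁,m₂), gcd(m₁,m₂), 0)`. -/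
theorem stmt_18 (m₁ m₂ : ℕ) (h12 : m₂ ≤ m₁) (h2 : 0 < m₂) (l : ℝ)
    (hl : (m₁ : ℝ) + (m₂ : ℝ) - (Nat.gcd m₁ m₂ : ℝ) ≤ l) :
    ∃ n : ℕ,
      tripleStep^[n] (l, m₁, m₂) =
        (l - m₁ - m₂ + (Nat.gcd m₁ m₂ : ℝ), Nat.gcd m₁ m₂, 0) ∧
      tripleStep (l - m₁ - m₂ + (Nat.gcd m₁ m₂ : ℝ), Nat.gcd m₁ m₂, 0) =
        (l - m₁ - m₂ + (Nat.gcd m₁ m₂ : ℝ), Nat.gcd m₁ m₂, 0) := by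
  obtain ⟨n, hn⟩ := tripleStep_aux m₁ m₂ h2 h12 l hl
  exact ⟨n, hn, by simp [tripleStep]⟩
end
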